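/- Let S ⊆ S_{m+1} be such that every permutation in S is indecomposable. Then the graph G_S of overlapping permutations with edges avoiding S is strongly connected: for any two vertices π, σ ∈ S_m there is a directed path from π to σ in G_S. -/
import Mathlib


/-- The standardization of the first m entries of τ ∈ S_{m+1} is π ∈ S_m. -/
def StdFront {m : ℕ} (τ : Equiv.Perm (Fin (m + 1))) (π : Equiv.Perm (Fin m)) : Prop :=
  ∀ a b : Fin m, π a < π b ↔ τ a.castSucc < τ b.castSucc

/-- The standardization of the last m entries of τ ∈ S_{m+1} is σ ∈ S_m. -/
def StdBack {m : ℕ} (τ : Equiv.Perm (Fin (m + 1))) (σ : Equiv.Perm (Fin m)) : Prop :=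
  ∀ a b : Fin m, σ a < σ b ↔ τ a.succ < τ b.succ

/-- The edge relation of the graph G_S of overlapping permutations: an edge from π to σ
whenever some τ ∈ S_{m+1} \ S has front standardization π and back standardization σ. -/
def GEdge {m : ℕ} (S : Set (Equiv.Perm (Fin (m + 1))))
    (π σ : Equiv.Perm (Fin m)) : Prop :=
  ∃ τ : Equiv.Perm (Fin (m + 1)), τ ∉ S ∧ StdFront τ π ∧ StdBack τ σ

/-- A permutation τ ∈ S_n is indecomposable if there is no i with 1 ≤ i ≤ n-1 such that
τ maps {1,…,i} into {1,…,i}. -/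
def Indecomposable {n : ℕ} (τ : Equiv.Perm (Fin n)) : Prop :=
  ¬ ∃ i : ℕ, 1 ≤ i ∧ i < n ∧ ∀ j : Fin n, j.val < i → (τ j).val < i

/-- Existence of a standardization of an injective tuple. -/
lemma exists_std {m : ℕ} (f : Fin m → Fin (m+1)) (hf : Function.Injective f) :
    ∃ ρ : Equiv.Perm (Fin m), ∀ a b : Fin m, ρ a < ρ b ↔ f a < f b := by
  have hcard : (Finset.univ.image f).card = m := by
    rw [Finset.card_image_of_injective _ hf, Finset.card_univ, Fintype.card_fin]
  let iso := (Finset.univ.image f).orderIsoOfFin hcard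
  let g : Fin m → Fin m := fun a => iso.symm ⟨f a, by simp⟩
  have hg : Function.Injective g := by
    intro a b hab
    exact hf (Subtype.ext_iff.mp (iso.symm.injective hab))
  refine ⟨Equiv.ofBijective g (Finite.injective_iff_bijective.mp hg), fun a b => ?_⟩
  show g a < g b ↔ f a < f b
  rw [iso.symm.lt_iff_lt]
  exact Iff.rfl

/-- A permutation that relates to the identity order at `j` fixes `j`. -/
lemma perm_eq_of_lt_iff {m : ℕ} (ρ : Equiv.Perm (Fin m)) (j : Fin m)
    (h : ∀ i, ρ i < ρ j ↔ i < j) : ρ j = j := by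
  have h1 : (Finset.univ.filter fun i => ρ i < ρ j) = Finset.Iio j := by
    ext i; simp [h i]
  have h2 : (Finset.univ.filter fun i => ρ i < ρ j).image ρ = Finset.Iio (ρ j) := by
    ext v
    simp only [Finset.mem_image, Finset.mem_filter, Finset.mem_univ, true_and, Finset.mem_Iio]
    constructor
    · rintro ⟨i, hi, rfl⟩; exact hi
    · intro hv; exact ⟨ρ.symm v, by simpa using hv, by simp⟩
  have h3 := Finset.card_image_of_injective
    (Finset.univ.filter fun i => ρ i < ρ j) ρ.injective
  rw [h2, h1] at h3
  have : (ρ j : ℕ) = (j : ℕ) := by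
    rw [Fin.card_Iio, Fin.card_Iio] at h3; exact h3
  exact Fin.ext this

/-- τ extending π by fixing the last point. -/
noncomputable def tauB {m : ℕ} (π : Equiv.Perm (Fin m)) : Equiv.Perm (Fin (m+1)) :=
  π.viaFintypeEmbedding Fin.castSuccEmb

lemma tauB_castSucc {m : ℕ} (π : Equiv.Perm (Fin m)) (a : Fin m) :
    tauB π a.castSucc = (π a).castSucc :=
  π.viaFintypeEmbedding_apply_image Fin.castSuccEmb a

lemma tauB_last {m : ℕ} (π : Equiv.Perm (Fin m)) : tauB π (Fin.last m) = Fin.last m := by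
  apply π.viaFintypeEmbedding_apply_notMem_range
  rintro ⟨a, ha⟩
  have : (a.castSucc : Fin (m+1)) = Fin.last m := ha
  exact absurd (congrArg Fin.val this) (by simp [Fin.castSucc]; omega)

/-- τ extending σ (shifted up) by fixing 0. -/
noncomputable def tauA {m : ℕ} (σ : Equiv.Perm (Fin m)) : Equiv.Perm (Fin (m+1)) :=
  σ.viaFintypeEmbedding (Fin.succEmb m)

lemma tauA_succ {m : ℕ} (σ : Equiv.Perm (Fin m)) (a : Fin m) :
    tauA σ a.succ = (σ a).succ :=
  σ.viaFintypeEmbedding_apply_image (Fin.succEmb m) a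

lemma tauA_zero {m : ℕ} (σ : Equiv.Perm (Fin m)) : tauA σ 0 = 0 := by
  apply σ.viaFintypeEmbedding_apply_notMem_range
  rintro ⟨a, ha⟩
  exact Fin.succ_ne_zero a ha

/-- From any π one can reach the identity (given that π fixes all positions ≥ k). -/
lemma part1 {m : ℕ} (S : Set (Equiv.Perm (Fin (m + 1))))
    (hS : ∀ τ ∈ S, Indecomposable τ) :
    ∀ k (π : Equiv.Perm (Fin m)), (∀ j : Fin m, k ≤ (j : ℕ) → π j = j) →
      Relation.ReflTransGen (GEdge S) π 1 := by
  intro k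
  induction k with
  | zero =>
    intro π hπ
    have : π = 1 := Equiv.ext fun j => hπ j (Nat.zero_le _)
    rw [this]
  | succ k ih =>
    intro π hπ
    rcases Nat.eq_zero_or_pos m with hm | hm
    · subst hm
      have : π = 1 := Equiv.ext fun j => absurd j.isLt (by omega)
      rw [this]
    set f : Fin m → Fin (m+1) := fun j => tauB π j.succ with hfdef
    have hfinj : Function.Injective f := fun a b hab =>
      Fin.succ_injective _ ((tauB π).injective hab)
    obtain ⟨σ, hσ⟩ := exists_std f hfinj
    -- values of f
    have hfval : ∀ i : Fin m, (f i : ℕ) =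
        if h : (i : ℕ) + 1 < m then ((π ⟨(i : ℕ) + 1, h⟩ : Fin m) : ℕ) else m := by
      intro i
      by_cases h : (i : ℕ) + 1 < m
      · have hi : (i.succ : Fin (m+1)) = Fin.castSucc ⟨(i : ℕ) + 1, h⟩ := Fin.ext (by simp)
        rw [hfdef]
        simp only [hi, tauB_castSucc, h, dif_pos]
        rfl
      · have him : (i : ℕ) + 1 = m := by omega
        have hi : (i.succ : Fin (m+1)) = Fin.last m := Fin.ext (by simp [him])
        rw [hfdef]
        simp only [hi, tauB_last, h, dif_neg, not_false_iff]
        rfl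
    -- π maps small values to small values
    have hsmall : ∀ x : Fin m, (x : ℕ) < k + 1 → ((π x : Fin m) : ℕ) < k + 1 := by
      intro x hx
      by_contra hc
      push_neg at hc
      have := hπ (π x) hc
      have : π x = x := π.injective this
      omega
    -- the edge from π to σ
    have hedge : GEdge S π σ := by
      refine ⟨tauB π, ?_, ?_, ?_⟩
      · intro hmem
        refine hS _ hmem ⟨m, hm, Nat.lt_succ_self m, ?_⟩
        intro j hj
        have hj' : (j : Fin (m+1)) = Fin.castSucc ⟨(j : ℕ), hj⟩ := Fin.ext rfl
        rw [hj', tauB_castSucc]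
        exact (π ⟨(j : ℕ), hj⟩).isLt
      · intro a b
        rw [tauB_castSucc, tauB_castSucc, Fin.castSucc_lt_castSucc_iff]
      · intro a b
        exact hσ a b
    refine Relation.ReflTransGen.head hedge (ih σ ?_)
    -- σ fixes all positions ≥ k
    intro j hj
    apply perm_eq_of_lt_iff
    intro i
    rw [hσ]
    have hfj : (f j : ℕ) = (j : ℕ) + 1 := by
      rw [hfval j]
      by_cases h : (j : ℕ) + 1 < m
      · rw [dif_pos h]
        have := hπ ⟨(j : ℕ) + 1, h⟩ (by simp; omega)
        rw [this]
      · rw [dif_neg h]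
        have := j.isLt
        omega
    rw [Fin.lt_def, Fin.lt_def, hfj]
    by_cases hik : k ≤ (i : ℕ)
    · have hfi : (f i : ℕ) = (i : ℕ) + 1 := by
        rw [hfval i]
        by_cases h : (i : ℕ) + 1 < m
        · rw [dif_pos h]
          have := hπ ⟨(i : ℕ) + 1, h⟩ (by simp; omega)
          rw [this]
        · rw [dif_neg h]
          have := i.isLt
          omega
      rw [hfi]
      omega
    · push_neg at hik
      have hfi : (f i : ℕ) < k + 1 := by
        rw [hfval i]
        by_cases h : (i : ℕ) + 1 < m
        · rw [dif_pos h]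
          exact hsmall ⟨(i : ℕ) + 1, h⟩ (by simp; omega)
        · exfalso
          have := j.isLt
          omega
      omega

/-- The identity reaches any σ (given that σ fixes all positions < m - k). -/
lemma part2 {m : ℕ} (S : Set (Equiv.Perm (Fin (m + 1))))
    (hS : ∀ τ ∈ S, Indecomposable τ) :
    ∀ k (σ : Equiv.Perm (Fin m)), (∀ j : Fin m, (j : ℕ) < m - k → σ j = j) →
      Relation.ReflTransGen (GEdge S) 1 σ := by
  intro k
  induction k with
  | zero =>
    intro σ hσ
    have : σ = 1 := Equiv.ext fun j => hσ j (by omega)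
    rw [this]
  | succ k ih =>
    intro σ hσ
    rcases Nat.eq_zero_or_pos m with hm | hm
    · subst hm
      have : σ = 1 := Equiv.ext fun j => absurd j.isLt (by omega)
      rw [this]
    set f : Fin m → Fin (m+1) := fun j => tauA σ j.castSucc with hfdef
    have hfinj : Function.Injective f := fun a b hab =>
      Fin.castSucc_injective _ ((tauA σ).injective hab)
    obtain ⟨ρ, hρ⟩ := exists_std f hfinj
    -- values of f
    have hfval : ∀ i : Fin m, (f i : ℕ) =
        if h : 0 < (i : ℕ) then ((σ ⟨(i : ℕ) - 1, by omega⟩ : Fin m) : ℕ) + 1 else 0 := by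
      intro i
      by_cases h : 0 < (i : ℕ)
      · have hi : (i.castSucc : Fin (m+1)) = Fin.succ ⟨(i : ℕ) - 1, by omega⟩ := by
          apply Fin.ext; simp; omega
        rw [hfdef]
        simp only [hi, tauA_succ, h, dif_pos]
        rfl
      · have hi0 : (i : ℕ) = 0 := by omega
        have hi : (i.castSucc : Fin (m+1)) = 0 := Fin.ext (by simp [hi0])
        rw [hfdef]
        simp only [hi, tauA_zero, h, dif_neg, not_false_iff]
        rfl
    -- σ maps large values to large values
    have hbig : ∀ x : Fin m, m - (k + 1) ≤ (x : ℕ) → m - (k + 1) ≤ ((σ x : Fin m) : ℕ) := by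
      intro x hx
      by_contra hc
      push_neg at hc
      have := hσ (σ x) hc
      have : σ x = x := σ.injective this
      omega
    -- the edge from ρ to σ
    have hedge : GEdge S ρ σ := by
      refine ⟨tauA σ, ?_, ?_, ?_⟩
      · intro hmem
        refine hS _ hmem ⟨1, le_refl 1, by omega, ?_⟩
        intro j hj
        have hj0 : (j : Fin (m+1)) = 0 := Fin.ext (by simp only [Fin.val_zero]; omega)
        rw [hj0, tauA_zero]
        simp
      · intro a b
        exact hρ a b
      · intro a b
        rw [tauA_succ, tauA_succ, Fin.succ_lt_succ_iff]
    refine Relation.ReflTransGen.tail (ih ρ ?_) hedge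
    -- ρ fixes all positions < m - k
    intro j hj
    apply perm_eq_of_lt_iff
    intro i
    rw [hρ]
    have hfj : (f j : ℕ) = (j : ℕ) := by
      rw [hfval j]
      by_cases h : 0 < (j : ℕ)
      · rw [dif_pos h]
        have := hσ ⟨(j : ℕ) - 1, by omega⟩ (by simp; omega)
        rw [this]
        simp; omega
      · rw [dif_neg h]; omega
    rw [Fin.lt_def, Fin.lt_def, hfj]
    by_cases hik : (i : ℕ) < m - k
    · have hfi : (f i : ℕ) = (i : ℕ) := by
        rw [hfval i]
        by_cases h : 0 < (i : ℕ)
        · rw [dif_pos h]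
          have := hσ ⟨(i : ℕ) - 1, by omega⟩ (by simp; omega)
          rw [this]
          simp; omega
        · rw [dif_neg h]; omega
      rw [hfi]
    · push_neg at hik
      have hfi : m - k ≤ (f i : ℕ) := by
        rw [hfval i]
        have h : 0 < (i : ℕ) := by omega
        rw [dif_pos h]
        have := hbig ⟨(i : ℕ) - 1, by omega⟩ (by simp; omega)
        omega
      omega

/-- if every permutation in S ⊆ S_{m+1} is indecomposable, then the graph
G_S is strongly connected: any vertex is reachable from any other by a directed path. -/
theorem G_S_strongly_connected (m : ℕ) (S : Set (Equiv.Perm (Fin (m + 1))))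
    (hS : ∀ τ ∈ S, Indecomposable τ) :
    ∀ π σ : Equiv.Perm (Fin m), Relation.ReflTransGen (GEdge S) π σ := by
  intro π σ
  refine Relation.ReflTransGen.trans
    (part1 S hS m π fun j hj => absurd j.isLt (by omega))
    (part2 S hS m σ fun j hj => absurd hj (by omega))
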